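/- In a fuzzy graph without isolated vertices, if D is a minimal strong dominating set then the complement V \ D is also a strong dominating set. -/

import Mathlib

open Finset

/-- A fuzzy graph on vertex type `V`. -/
structure FuzzyGraph (V : Type*) where
  ρ : V → ℝ
  υ : V → V → ℝ
  ρ_nonneg : ∀ a, 0 ≤ ρ a
  ρ_le_one : ∀ a, ρ a ≤ 1
  υ_nonneg : ∀ a b, 0 ≤ υ a b
  symm : ∀ a b, υ a b = υ b a
  υ_le : ∀ a b, υ a b ≤ min (ρ a) (ρ b)
  loopless : ∀ a, υ a a = 0

namespace FuzzyGraph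

variable {V : Type*} [Fintype V] [DecidableEq V]

/-- Strength of a path given by its list of successive vertices:
the minimum of the weights of its edges. -/
def pathStrength (X : FuzzyGraph V) : List V → ℝ
  | [] => 0
  | [_] => 0
  | [a, b] => X.υ a b
  | a :: b :: c :: l => min (X.υ a b) (X.pathStrength (b :: c :: l))

/-- `l` is a path from `a` to `b` : distinct vertices joined by positive-weight edges. -/
def IsPath (X : FuzzyGraph V) (a b : V) (l : List V) : Prop :=
  l.Nodup ∧ l.head? = some a ∧ l.getLast? = some b ∧ 2 ≤ l.length ∧
    l.Chain' (fun x y => 0 < X.υ x y)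

/-- Strength of connectedness between two vertices: maximum strength of a path. -/
noncomputable def conn (X : FuzzyGraph V) (a b : V) : ℝ :=
  sSup {s | ∃ l : List V, X.IsPath a b l ∧ s = X.pathStrength l}

/-- Delete the edge `ab` (set its weight to `0`). -/
def deleteEdge (X : FuzzyGraph V) (a b : V) : FuzzyGraph V where
  ρ := X.ρ
  υ x y := if (x = a ∧ y = b) ∨ (x = b ∧ y = a) then 0 else X.υ x y
  ρ_nonneg := X.ρ_nonneg
  ρ_le_one := X.ρ_le_one
  υ_nonneg := by
    intro x y; try dsimp only
    split_ifs
    · exact le_rfl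
    · exact X.υ_nonneg x y
  symm := by
    intro x y; try dsimp only
    by_cases h : (x = a ∧ y = b) ∨ (x = b ∧ y = a)
    · rw [if_pos h, if_pos (by tauto)]
    · rw [if_neg h, if_neg (by tauto), X.symm]
  υ_le := by
    intro x y; try dsimp only
    split_ifs
    · exact le_min (X.ρ_nonneg x) (X.ρ_nonneg y)
    · exact X.υ_le x y
  loopless := by
    intro x; try dsimp only
    split_ifs
    · rfl
    · exact X.loopless x

/-- `ab` is a strong edge (α- or β-strong). -/
def StrongEdge (X : FuzzyGraph V) (a b : V) : Prop :=
  0 < X.υ a b ∧ (X.deleteEdge a b).conn a b ≤ X.υ a b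

/-- `ab` is an α-strong edge. -/
def AlphaStrong (X : FuzzyGraph V) (a b : V) : Prop :=
  0 < X.υ a b ∧ (X.deleteEdge a b).conn a b < X.υ a b

/-- `ab` is a β-strong edge. -/
def BetaStrong (X : FuzzyGraph V) (a b : V) : Prop :=
  0 < X.υ a b ∧ X.υ a b = (X.deleteEdge a b).conn a b

/-- `ab` is a δ-edge. -/
def DeltaEdge (X : FuzzyGraph V) (a b : V) : Prop :=
  0 < X.υ a b ∧ X.υ a b < (X.deleteEdge a b).conn a b

/-- The minimum weight of a strong edge incident at `a`. -/
noncomputable def minInc (X : FuzzyGraph V) (a : V) : ℝ :=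
  sInf {w | ∃ b, X.StrongEdge a b ∧ w = X.υ a b}

/-- The weight of a set of vertices. -/
noncomputable def weight (X : FuzzyGraph V) (S : Finset V) : ℝ :=
  ∑ a ∈ S, X.minInc a

/-- `D` is a strong dominating set. -/
def IsSDS (X : FuzzyGraph V) (D : Finset V) : Prop :=
  ∀ v, v ∉ D → ∃ a ∈ D, X.StrongEdge a v

/-- `D` is a minimal strong dominating set. -/
def IsMinimalSDS (X : FuzzyGraph V) (D : Finset V) : Prop :=
  X.IsSDS D ∧ ∀ a ∈ D, ¬ X.IsSDS (D.erase a)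

/-- `D` is a minimum (least weight) strong dominating set. -/
def IsMinimumSDS (X : FuzzyGraph V) (D : Finset V) : Prop :=
  X.IsSDS D ∧ ∀ D' : Finset V, X.IsSDS D' → X.weight D ≤ X.weight D'

/-- The strong domination degree of a vertex. -/
noncomputable def sd (X : FuzzyGraph V) (u : V) : ℝ :=
  sInf {w | ∃ D : Finset V, X.IsMinimalSDS D ∧ u ∈ D ∧ w = X.weight D}

/-- The strong domination number. -/
noncomputable def gammaS (X : FuzzyGraph V) : ℝ :=
  sInf {w | ∃ D : Finset V, X.IsSDS D ∧ w = X.weight D}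

/-- The upper strong domination number. -/
noncomputable def GammaS (X : FuzzyGraph V) : ℝ :=
  sSup {w | ∃ D : Finset V, X.IsMinimalSDS D ∧ w = X.weight D}

/-- The strong domination index. -/
noncomputable def SDI (X : FuzzyGraph V) : ℝ := ∑ u : V, X.sd u

/-- `X` is connected. -/
def Connected (X : FuzzyGraph V) : Prop := ∀ a b : V, a ≠ b → ∃ l, X.IsPath a b l

/-- `X` is a strong fuzzy graph: every edge is strong. -/
def IsStrongFG (X : FuzzyGraph V) : Prop := ∀ a b, 0 < X.υ a b → X.StrongEdge a b

/-- Underlying (support) simple graph. -/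
def support (X : FuzzyGraph V) : SimpleGraph V where
  Adj a b := 0 < X.υ a b
  symm := ⟨by intro a b h; show 0 < X.υ b a; rw [X.symm]; exact h⟩
  loopless := ⟨by intro a h; change 0 < X.υ a a at h; rw [X.loopless] at h; exact lt_irrefl 0 h⟩

/-- `X` is a fuzzy tree. -/
def IsFuzzyTree (X : FuzzyGraph V) : Prop :=
  ∃ F : FuzzyGraph V, F.ρ = X.ρ ∧ (∀ a b, F.υ a b = X.υ a b ∨ F.υ a b = 0) ∧
    F.support.IsTree ∧ ∀ a b, 0 < X.υ a b → F.υ a b = 0 → X.υ a b < F.conn a b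

/-- The size of a fuzzy graph: the sum of all edge weights. -/
noncomputable def size (X : FuzzyGraph V) : ℝ := (∑ a : V, ∑ b : V, X.υ a b) / 2

/-- The underlying graph of `X` is a cycle. -/
def IsCycleGraph (X : FuzzyGraph V) : Prop :=
  ∃ n : ℕ, 3 ≤ n ∧ ∃ f : ZMod n ≃ V,
    ∀ x y : V, 0 < X.υ x y ↔ ∃ i : ZMod n, (x = f i ∧ y = f (i + 1)) ∨ (x = f (i + 1) ∧ y = f i)

/-- `X` is a fuzzy cycle: a cycle with at least two edges of minimum weight. -/
def IsFuzzyCycle (X : FuzzyGraph V) : Prop :=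
  X.IsCycleGraph ∧ ∃ a b c d : V, 0 < X.υ a b ∧ 0 < X.υ c d ∧
    Sym2.mk (a, b) ≠ Sym2.mk (c, d) ∧ X.υ a b = X.υ c d ∧
    ∀ x y, 0 < X.υ x y → X.υ a b ≤ X.υ x y

/-- A set of pairwise fuzzy independent vertices. -/
def IsFuzzyIndep (X : FuzzyGraph V) (S : Finset V) : Prop :=
  ∀ a ∈ S, ∀ b ∈ S, a ≠ b → ¬ X.StrongEdge a b

/-- The strong independent domination number. -/
noncomputable def iS (X : FuzzyGraph V) : ℝ :=
  sInf {w | ∃ D : Finset V, X.IsSDS D ∧ X.IsFuzzyIndep D ∧ w = X.weight D}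

/-- The strong independence number. -/
noncomputable def betaS (X : FuzzyGraph V) : ℝ :=
  sSup {w | ∃ S : Finset V, X.IsFuzzyIndep S ∧ w = X.weight S}

/-- Closed strong neighborhood. -/
def closedNbhd (X : FuzzyGraph V) (a : V) : Set V := insert a {b | X.StrongEdge a b}

/-- Open strong neighborhood. -/
def openNbhd (X : FuzzyGraph V) (a : V) : Set V := {b | X.StrongEdge a b}

/-- Private neighborhood of `a` with respect to `S`. -/
def privNbhd (X : FuzzyGraph V) (a : V) (S : Finset V) : Set V :=
  X.closedNbhd a \ ⋃ b ∈ S.erase a, X.closedNbhd b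

/-- `S` is a fuzzy irredundant set. -/
def IsIrredundant (X : FuzzyGraph V) (S : Finset V) : Prop :=
  ∀ a ∈ S, (X.privNbhd a S).Nonempty

/-- `S` is a maximal fuzzy irredundant set. -/
def IsMaximalIrredundant (X : FuzzyGraph V) (S : Finset V) : Prop :=
  X.IsIrredundant S ∧ ∀ v ∉ S, ¬ X.IsIrredundant (insert v S)

/-- The strong irredundance number. -/
noncomputable def irS (X : FuzzyGraph V) : ℝ :=
  sInf {w | ∃ S : Finset V, X.IsMaximalIrredundant S ∧ w = X.weight S}

end FuzzyGraph

/-!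
Minimality of `D` means that every `v ∈ D` is needed: some vertex is strongly dominated by
`v` and by no other member of `D`. If that vertex is `v` itself, then `v` has no strong
neighbour in `D`, so the strong neighbour it has (there are no isolated vertices) lies outside
`D`; otherwise it is a vertex outside `D` strongly adjacent to `v`. Either way `v` is strongly
dominated by `Dᶜ`, using that strong edges are symmetric because reversing a path preserves its
strength.
-/

namespace FuzzyGraph

variable {V : Type*}

lemma pathStrength_cons_cons (X : FuzzyGraph V) (a b : V) {l : List V} (hl : l ≠ []) :
    X.pathStrength (a :: b :: l) = min (X.υ a b) (X.pathStrength (b :: l)) := by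
  obtain ⟨c, t, rfl⟩ := List.exists_cons_of_ne_nil hl
  rfl

lemma pathStrength_append_pair (X : FuzzyGraph V) (x y : V) :
    ∀ {m : List V}, m ≠ [] →
      X.pathStrength (m ++ [x, y]) = min (X.pathStrength (m ++ [x])) (X.υ x y)
  | [a], _ => rfl
  | a :: b :: t, _ => by
    simp only [List.cons_append]
    rw [pathStrength_cons_cons X a b (by simp), pathStrength_cons_cons X a b (by simp),
      ← List.cons_append, pathStrength_append_pair X x y (List.cons_ne_nil b t),
      List.cons_append, min_assoc]

lemma pathStrength_reverse (X : FuzzyGraph V) :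
    ∀ l : List V, X.pathStrength l.reverse = X.pathStrength l
  | [] => rfl
  | [_] => rfl
  | [a, b] => X.symm b a
  | a :: b :: c :: t => by
    have hrev : (a :: b :: c :: t).reverse = (c :: t).reverse ++ [b, a] := by simp
    have hrev' : (c :: t).reverse ++ [b] = (b :: c :: t).reverse := by simp
    rw [hrev, pathStrength_append_pair X b a (by simp), hrev',
      pathStrength_reverse X (b :: c :: t),
      pathStrength_cons_cons X a b (List.cons_ne_nil c t), X.symm b a, min_comm]

lemma IsPath.reverse {X : FuzzyGraph V} {a b : V} {l : List V} (h : X.IsPath a b l) :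
    X.IsPath b a l.reverse := by
  obtain ⟨hnd, hhead, hlast, hlen, hchain⟩ := h
  refine ⟨List.nodup_reverse.mpr hnd, by rwa [List.head?_reverse], by rwa [List.getLast?_reverse],
    by simpa using hlen, ?_⟩
  exact List.isChain_reverse.mpr (hchain.imp fun x y hxy => by rwa [X.symm])

lemma conn_comm (X : FuzzyGraph V) (a b : V) : X.conn a b = X.conn b a := by
  suffices h : ∀ a b, {s | ∃ l, X.IsPath a b l ∧ s = X.pathStrength l} ⊆
      {s | ∃ l, X.IsPath b a l ∧ s = X.pathStrength l} from
    congrArg sSup ((h a b).antisymm (h b a))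
  rintro a b _ ⟨l, hl, rfl⟩
  exact ⟨l.reverse, hl.reverse, (pathStrength_reverse X l).symm⟩

variable [DecidableEq V]

lemma deleteEdge_comm (X : FuzzyGraph V) (a b : V) : X.deleteEdge a b = X.deleteEdge b a := by
  have hυ : (X.deleteEdge a b).υ = (X.deleteEdge b a).υ := by
    funext x y
    simp only [deleteEdge, or_comm]
  cases X
  simpa [deleteEdge] using hυ

lemma StrongEdge.symm {X : FuzzyGraph V} {a b : V} (h : X.StrongEdge a b) : X.StrongEdge b a := by
  obtain ⟨hpos, hconn⟩ := h
  refine ⟨by rwa [X.symm], ?_⟩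
  rwa [deleteEdge_comm, conn_comm, X.symm]

lemma StrongEdge.ne {X : FuzzyGraph V} {a b : V} (h : X.StrongEdge a b) : a ≠ b := by
  rintro rfl
  exact h.1.ne' (X.loopless a)

lemma IsMinimalSDS.forall_not_strongEdge_or_exists_strongEdge {X : FuzzyGraph V} {D : Finset V}
    (hD : X.IsMinimalSDS D) {v : V} (hv : v ∈ D) :
    (∀ a ∈ D, ¬ X.StrongEdge a v) ∨ ∃ w ∉ D, X.StrongEdge v w := by
  obtain ⟨hSDS, hmin⟩ := hD
  obtain ⟨w, hw, hw_undom⟩ : ∃ w ∉ D.erase v, ∀ a ∈ D.erase v, ¬ X.StrongEdge a w := by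
    simpa [IsSDS] using hmin v hv
  by_cases hwv : w = v
  · subst hwv
    exact Or.inl fun a ha hav => hw_undom a (mem_erase.mpr ⟨hav.ne, ha⟩) hav
  · have hwD : w ∉ D := fun hwD => hw (mem_erase.mpr ⟨hwv, hwD⟩)
    obtain ⟨a, haD, haw⟩ := hSDS w hwD
    obtain rfl : a = v := by_contra fun hav => hw_undom a (mem_erase.mpr ⟨hav, haD⟩) haw
    exact Or.inr ⟨w, hwD, haw⟩

end FuzzyGraph

/-- In a fuzzy graph without isolated vertices, the complement of a
minimal strong dominating set is a strong dominating set. -/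
theorem FuzzyGraph.compl_isSDS_of_isMinimalSDS {V : Type*} [Fintype V] [DecidableEq V]
    (X : FuzzyGraph V) (hniso : ∀ a : V, ∃ b : V, X.StrongEdge a b)
    (D : Finset V) (hD : X.IsMinimalSDS D) :
    X.IsSDS Dᶜ := by
  intro v hv
  rw [Finset.mem_compl, not_not] at hv
  rcases hD.forall_not_strongEdge_or_exists_strongEdge hv with hv_isolated | ⟨w, hwD, hvw⟩
  · obtain ⟨b, hvb⟩ := hniso v
    have hbD : b ∉ D := fun hbD => hv_isolated b hbD hvb.symm
    exact ⟨b, Finset.mem_compl.mpr hbD, hvb.symm⟩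
  · exact ⟨w, Finset.mem_compl.mpr hwD, hvw.symm⟩
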